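/- arXiv:1604.03792 — 4 statements merged into one kernel-verified Lean document; each statement's English description precedes it below -/
import Mathlib

section
/- Let t ≥ 2, N ≥ 2 be integers and let λ, b₀ be integers with 2 ≤ λ ≤ b₀ ≤ t − 1. Suppose (λ·t − 1) divides b₀·(t^N − 1), and set P = b₀·(t^N − 1)/(λ·t − 1). Then P mod t = b₀, t^(N−1) ≤ P < t^N (so P has exactly N digits in base t), and b₀·t^(N−1) + (P − b₀)/t = λ·P, i.e. moving the last base-t digit of P to the front multiplies P by λ. -/
/-- If `2 ≤ λ ≤ b₀ ≤ t − 1` and `(λ·t − 1) ∣ b₀·(t^N − 1)`, then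
`P = b₀·(t^N − 1)/(λ·t − 1)` is an N-digit base-t number with last digit `b₀`,
and moving that digit to the front multiplies `P` by `λ`. -/
theorem parasitic_construction (t : ℤ) (N : ℕ) (lam b0 : ℤ)
    (ht : 2 ≤ t) (hN : 2 ≤ N)
    (hlam : 2 ≤ lam) (hlb : lam ≤ b0) (hb0 : b0 ≤ t - 1)
    (hdvd : (lam * t - 1) ∣ b0 * (t ^ N - 1))
    (P : ℤ) (hP : P = b0 * (t ^ N - 1) / (lam * t - 1)) :
    P % t = b0 ∧ t ^ (N - 1) ≤ P ∧ P < t ^ N ∧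
      b0 * t ^ (N - 1) + (P - b0) / t = lam * P := by
  have htpos : 0 < t := by linarith
  have hDpos : 0 < lam * t - 1 := by nlinarith
  have key : P * (lam * t - 1) = b0 * (t ^ N - 1) := by
    rw [hP, Int.ediv_mul_cancel hdvd]
  have htN : t ^ (N - 1) * t = t ^ N := by
    rw [← pow_succ]; congr 1; omega
  have htNpos : 0 < t ^ N := pow_pos htpos N
  have htN1pos : 0 < t ^ (N - 1) := pow_pos htpos _
  have hb0t : b0 ≤ t ^ (N - 1) - 1 := by
    have h1 : t ≤ t ^ (N - 1) := by
      calc t = t ^ 1 := (pow_one t).symm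
      _ ≤ t ^ (N - 1) := pow_le_pow_right₀ (by linarith) (by omega)
    linarith
  have hdvdt : P - b0 = t * (P * lam - b0 * t ^ (N - 1)) := by
    linear_combination -key + b0 * htN
  have hmod : P % t = b0 := by
    have heq : P = b0 + t * (P * lam - b0 * t ^ (N - 1)) := by linarith
    rw [heq, Int.add_mul_emod_self_left]
    exact Int.emod_eq_of_lt (by linarith) (by linarith)
  have hlow : t ^ (N - 1) ≤ P := by
    have h1 : t ^ (N - 1) * (lam * t - 1) ≤ P * (lam * t - 1) := by
      rw [key]
      nlinarith [mul_nonneg (sub_nonneg.2 hlb) htNpos.le, htN]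
    exact le_of_mul_le_mul_right h1 hDpos
  have hhigh : P < t ^ N := by
    have h2 : P * (lam * t - 1) < t ^ N * (lam * t - 1) := by
      rw [key]
      nlinarith [mul_pos htpos htNpos,
        mul_le_mul_of_nonneg_right hb0 (show (0:ℤ) ≤ t ^ N - 1 by linarith),
        mul_nonneg (mul_nonneg (show (0:ℤ) ≤ lam - 2 by linarith) htpos.le) htNpos.le]
    exact lt_of_mul_lt_mul_right h2 hDpos.le
  refine ⟨hmod, hlow, hhigh, ?_⟩
  rw [hdvdt, Int.mul_ediv_cancel_left _ (by linarith : t ≠ 0)]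
  ring
end

section
/- Let t ≥ 2, N ≥ 2 be integers and let λ, b₀ be integers with 2 ≤ λ ≤ b₀ ≤ t − 1. Suppose (λ·t − 1) divides b₀·(t^N − 1), and set P = b₀·(t^N − 1)/(λ·t − 1). Then the little-endian base-t digit list of λ·P is the cyclic rotation by one position of the little-endian base-t digit list of P (i.e., Nat.digits t (λ·P) = (Nat.digits t P).rotate 1), corresponding to moving the least significant digit of P to the most significant position. -/
/-- If `2 ≤ λ ≤ b₀ ≤ t − 1` and `(λ·t − 1) ∣ b₀·(t^N − 1)`, then for
`P = b₀·(t^N − 1)/(λ·t − 1)` the little-endian base-t digit list of `λ·P`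
is the rotation by one of that of `P`. -/
theorem parasitic_digits_rotate (t N lam b0 : ℕ)
    (ht : 2 ≤ t) (hN : 2 ≤ N)
    (hlam : 2 ≤ lam) (hlb : lam ≤ b0) (hb0 : b0 ≤ t - 1)
    (hdvd : (lam * t - 1) ∣ b0 * (t ^ N - 1))
    (P : ℕ) (hP : P = b0 * (t ^ N - 1) / (lam * t - 1)) :
    Nat.digits t (lam * P) = (Nat.digits t P).rotate 1 := by
  have ht1 : 1 < t := ht
  have hb0t : b0 < t := by omega
  have hmul : P * (lam * t - 1) = b0 * (t ^ N - 1) := by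
    rw [hP]; exact Nat.div_mul_cancel hdvd
  have htN1 : 1 ≤ t ^ N := Nat.one_le_pow _ _ (by omega)
  have hlt1 : 1 ≤ lam * t := by nlinarith
  -- the defining equation, subtraction-free
  have hE : lam * t * P + b0 = b0 * t ^ N + P := by
    have h := hmul
    zify [hlt1, htN1] at h
    zify
    linear_combination h
  have htpow : t ^ (N - 1) * t = t ^ N := by
    rw [← pow_succ]; congr 1; omega
  have htpow2 : t ^ (N - 2) * t = t ^ (N - 1) := by
    rw [← pow_succ]; congr 1; omega
  have hpow1 : 1 ≤ t ^ (N - 1) := Nat.one_le_pow _ _ (by omega)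
  have hpow2 : 1 ≤ t ^ (N - 2) := Nat.one_le_pow _ _ (by omega)
  -- bounds on P
  have hPlow : t ^ (N - 1) ≤ P := by
    by_contra h
    push_neg at h
    have hP1 : P + 1 ≤ t ^ (N - 1) := h
    have h5 : lam * t * P + lam * t ≤ lam * t ^ N := by
      calc lam * t * P + lam * t = lam * t * (P + 1) := by ring
      _ ≤ lam * t * t ^ (N - 1) := Nat.mul_le_mul_left _ hP1
      _ = lam * (t ^ (N - 1) * t) := by ring
      _ = lam * t ^ N := by rw [htpow]
    have h6 : lam * t ^ N ≤ b0 * t ^ N := Nat.mul_le_mul_right _ hlb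
    have h7 : t + t ≤ lam * t := by
      calc t + t = 2 * t := by ring
      _ ≤ lam * t := Nat.mul_le_mul_right t hlam
    omega
  have hP0 : 0 < P := by omega
  have hPhigh : P < t ^ N := by
    by_contra h
    push_neg at h
    have h5 : b0 * t ^ N ≤ b0 * P := Nat.mul_le_mul_left _ h
    have h6 : t * P + t * P ≤ lam * t * P := by
      calc t * P + t * P = 2 * (t * P) := by ring
      _ ≤ lam * (t * P) := Nat.mul_le_mul_right _ hlam
      _ = lam * t * P := by ring
    have h7 : b0 * P + P ≤ t * P := by
      calc b0 * P + P = (b0 + 1) * P := by ring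
      _ ≤ t * P := Nat.mul_le_mul_right P (by omega)
    have h9 : 1 ≤ t * P := Nat.mul_pos (by omega) hP0
    omega
  set q := P / t with hq
  -- least significant digit of P is b0
  have hmod : P % t = b0 := by
    have h1 : (lam * t * P + b0) % t = (b0 * t ^ N + P) % t := by rw [hE]
    have e1 : lam * t * P = t * (lam * P) := by ring
    have e2 : b0 * t ^ N = t * (b0 * t ^ (N - 1)) := by rw [← htpow]; ring
    rw [e1, e2, Nat.mul_add_mod, Nat.mul_add_mod, Nat.mod_eq_of_lt hb0t] at h1
    omega
  have hPq : P = t * q + b0 := by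
    have h := Nat.div_add_mod P t
    rw [← hq, hmod] at h
    omega
  -- the key identity:  lam * P = q + b0 * t^(N-1)
  have key : lam * P = q + b0 * t ^ (N - 1) := by
    have h4 : lam * P * t = (q + b0 * t ^ (N - 1)) * t := by
      have e1 : lam * P * t = lam * t * (t * q) + lam * t * b0 := by
        rw [hPq]; ring
      have e2 : (q + b0 * t ^ (N - 1)) * t = t * q + b0 * t ^ N := by
        rw [add_mul, mul_assoc, htpow]; ring
      have e3 : lam * t * P = lam * t * (t * q) + lam * t * b0 := by
        rw [hPq]; ring
      omega
    exact Nat.eq_of_mul_eq_mul_right (by omega) h4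
  -- bounds on q
  have htq : t * q ≤ P := by omega
  have hq1 : q < t ^ (N - 1) := by
    have h5 : t * q < t * t ^ (N - 1) := by
      calc t * q ≤ P := htq
      _ < t ^ N := hPhigh
      _ = t * t ^ (N - 1) := by rw [← htpow]; ring
    exact lt_of_mul_lt_mul_left h5 (by omega)
  have hq2 : t ^ (N - 2) ≤ q := by
    by_contra h
    push_neg at h
    have h5 : t * q + t ≤ t ^ (N - 1) := by
      calc t * q + t = t * (q + 1) := by ring
      _ ≤ t * t ^ (N - 2) := Nat.mul_le_mul_left _ h
      _ = t ^ (N - 1) := by rw [← htpow2]; ring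
    omega
  have hq0 : q ≠ 0 := by omega
  -- length of digits of q is N - 1
  have hlen : (Nat.digits t q).length = N - 1 := by
    have l1 : q < t ^ (Nat.digits t q).length := Nat.lt_base_pow_length_digits ht1
    have l2 : t ^ (Nat.digits t q).length ≤ t * q := Nat.base_pow_length_digits_le t q ht1 hq0
    have u1 : t ^ (N - 2) < t ^ (Nat.digits t q).length := lt_of_le_of_lt hq2 l1
    have u2 : t ^ (Nat.digits t q).length < t ^ N := by
      calc t ^ (Nat.digits t q).length ≤ t * q := l2
      _ ≤ P := htq
      _ < t ^ N := hPhigh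
    have v1 : N - 2 < (Nat.digits t q).length := (Nat.pow_lt_pow_iff_right ht1).mp u1
    have v2 : (Nat.digits t q).length < N := (Nat.pow_lt_pow_iff_right ht1).mp u2
    omega
  -- digits of P
  have hd1 : Nat.digits t P = b0 :: Nat.digits t q := by
    rw [Nat.digits_def' ht1 hP0, hmod]
  -- digits of lam * P
  have hofd : Nat.ofDigits t (Nat.digits t q ++ [b0]) = lam * P := by
    rw [Nat.ofDigits_append, Nat.ofDigits_digits, key, hlen]
    simp [Nat.ofDigits]
    ring
  have hd2 : Nat.digits t (lam * P) = Nat.digits t q ++ [b0] := by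
    rw [← hofd]
    apply Nat.digits_ofDigits t ht1
    · intro l hl
      rcases List.mem_append.mp hl with h | h
      · exact Nat.digits_lt_base ht1 h
      · simp at h; omega
    · intro h
      have : (Nat.digits t q ++ [b0]).getLast h = b0 := List.getLast_append _
      rw [this]
      omega
  rw [hd1, hd2, List.rotate_cons_succ, List.rotate_zero]
end

section
/- For every integer t ≥ 2 and all integers λ, b₀ with 2 ≤ λ ≤ b₀ ≤ t − 1, there exist an integer N ≥ 2 and a positive integer P with t^(N−1) ≤ P < t^N, P mod t = b₀, and b₀·t^(N−1) + (P − b₀)/t = λ·P; that is, a λ-parasitic number in base t with last digit b₀ exists. -/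
/-- For every base `t ≥ 2` and `2 ≤ λ ≤ b₀ ≤ t − 1` there exists a
λ-parasitic number in base `t` with last digit `b₀`. -/
theorem parasitic_exists (t lam b0 : ℤ) (ht : 2 ≤ t)
    (hlam : 2 ≤ lam) (hlb : lam ≤ b0) (hb0 : b0 ≤ t - 1) :
    ∃ (N : ℕ) (P : ℤ), 2 ≤ N ∧ 0 < P ∧ t ^ (N - 1) ≤ P ∧ P < t ^ N ∧
      P % t = b0 ∧ b0 * t ^ (N - 1) + (P - b0) / t = lam * P := by
  set m : ℤ := lam * t - 1 with hm_def
  have hm3 : 3 ≤ m := by nlinarith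
  have hm0 : 0 < m := by linarith
  have hcop : IsCoprime t m := ⟨lam, -1, by ring⟩
  set n : ℕ := m.natAbs with hn_def
  have hn : (n : ℤ) = m := Int.natAbs_of_nonneg hm0.le
  have hn3 : 3 ≤ n := by omega
  haveI : NeZero n := ⟨by omega⟩
  have hcopN : Nat.Coprime t.natAbs n := Int.isCoprime_iff_gcd_eq_one.mp hcop
  set N : ℕ := Nat.totient n with hN_def
  have hN2 : 2 ≤ N := by
    have h1 : 1 ≤ N := Nat.totient_pos.2 (by omega)
    have : N ≠ 1 := by
      intro h
      rcases Nat.totient_eq_one_iff.mp h with h' | h' <;> omega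
    omega
  -- Euler's theorem: t^N ≡ 1 mod m
  have hu := ZMod.pow_totient (ZMod.unitOfCoprime t.natAbs hcopN)
  have hpow : ((t : ZMod n)) ^ N = 1 := by
    have := congrArg (Units.val) hu
    rw [Units.val_pow_eq_pow_val, ZMod.coe_unitOfCoprime] at this
    have ht' : ((t.natAbs : ℕ) : ZMod n) = ((t : ℤ) : ZMod n) := by
      rw [← Int.cast_natCast, Int.natAbs_of_nonneg (by omega : (0:ℤ) ≤ t)]
    rw [ht'] at this
    exact this
  have hdvd1 : m ∣ t ^ N - 1 := by
    rw [← hn]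
    have : ((t ^ N - 1 : ℤ) : ZMod n) = 0 := by push_cast [hpow]; ring
    exact (ZMod.intCast_zmod_eq_zero_iff_dvd _ _).mp this
  obtain ⟨N', hNs⟩ : ∃ N', N = N' + 1 := ⟨N - 1, by omega⟩
  have he : N - 1 = N' := by omega
  have hNt : t ^ N = t ^ N' * t := by rw [hNs, pow_succ]
  -- hence m ∣ t^N' - lam
  have hdvd2 : m ∣ t ^ N' - lam := by
    have key : t * (t ^ N' - lam) = (t ^ N - 1) - m := by
      rw [hNt, hm_def]; ring
    have hmd : m ∣ t * (t ^ N' - lam) := by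
      rw [key]; exact dvd_sub hdvd1 dvd_rfl
    exact hcop.symm.dvd_of_dvd_mul_left hmd
  obtain ⟨k, hk⟩ := hdvd2
  have htpos : (0:ℤ) < t := by omega
  have htN1 : t ≤ t ^ N' := by
    calc t = t ^ 1 := (pow_one t).symm
    _ ≤ t ^ N' := pow_le_pow_right₀ (by omega) (by omega)
  have hk0 : 0 ≤ k := by nlinarith
  have hS : (0:ℤ) < t * k + 1 := by nlinarith [mul_nonneg htpos.le hk0]
  refine ⟨N, b0 * (t * k + 1), hN2, ?_, ?_, ?_, ?_, ?_⟩
  · nlinarith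
  · rw [he]
    have h1 : t ^ N' = m * k + lam := by linarith [hk]
    rw [h1, hm_def]
    nlinarith [mul_nonneg (mul_nonneg (sub_nonneg.mpr hlb) htpos.le) hk0]
  · have hk' : t ^ N' - lam = (lam * t - 1) * k := by rw [← hm_def]; exact hk
    have hN' : t ^ N = m * (t * k + 1) + 1 := by
      rw [hNt, hm_def]; linear_combination t * hk'
    rw [hN']
    have hb0m : b0 < m := by nlinarith
    nlinarith [mul_pos (sub_pos.mpr hb0m) hS]
  · have : b0 * (t * k + 1) = b0 + b0 * k * t := by ring
    rw [this, Int.add_mul_emod_self_right]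
    exact Int.emod_eq_of_lt (by omega) (by omega)
  · have hdiv : (b0 * (t * k + 1) - b0) / t = b0 * k := by
      have : b0 * (t * k + 1) - b0 = b0 * k * t := by ring
      rw [this, Int.mul_ediv_cancel _ (by omega)]
    rw [hdiv, he]
    have h1 : t ^ N' = m * k + lam := by linarith [hk]
    rw [h1, hm_def]; ring
end

section
/- Let t ≥ 2, N ≥ 2 be integers and λ, b₀ integers with λ ≥ 2 and 1 ≤ b₀ ≤ t − 1, such that (λ·t − 1) divides b₀·(t^N − 1). Set P = b₀·(t^N − 1)/(λ·t − 1). Then P ≥ t^(N−1) (i.e. P has exactly N digits in base t) if and only if b₀ ≥ λ. -/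
/-- The candidate `P = b₀·(t^N − 1)/(λ·t − 1)` has exactly `N` base-t digits
(i.e. `P ≥ t^(N−1)`) iff `b₀ ≥ λ`. -/
theorem digit_count_iff (t : ℤ) (N : ℕ) (lam b0 : ℤ)
    (ht : 2 ≤ t) (hN : 2 ≤ N)
    (hlam : 2 ≤ lam) (hb0l : 1 ≤ b0) (hb0 : b0 ≤ t - 1)
    (hdvd : (lam * t - 1) ∣ b0 * (t ^ N - 1))
    (P : ℤ) (hP : P = b0 * (t ^ N - 1) / (lam * t - 1)) :
    t ^ (N - 1) ≤ P ↔ lam ≤ b0 := by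
  have hD : 0 < lam * t - 1 := by nlinarith
  have hPD : P * (lam * t - 1) = b0 * (t ^ N - 1) := by
    rw [hP]; exact Int.ediv_mul_cancel hdvd
  have hpow : t ^ N = t ^ (N - 1) * t := by
    rw [← pow_succ]; congr 1; omega
  have hX : 0 < t ^ (N - 1) := pow_pos (by linarith) _
  have ht1 : t ≤ t ^ (N - 1) := by
    calc t = t ^ 1 := (pow_one t).symm
    _ ≤ t ^ (N - 1) := pow_le_pow_right₀ (by linarith) (by omega)
  constructor
  · intro h
    by_contra hc
    push_neg at hc
    have key := mul_le_mul_of_nonneg_right h hD.le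
    rw [hPD, hpow] at key
    nlinarith [mul_nonneg (mul_nonneg (by linarith : (0:ℤ) ≤ lam - b0 - 1) hX.le) (by linarith : (0:ℤ) ≤ t), mul_le_mul_of_nonneg_left ht hX.le]
  · intro h
    have key : t ^ (N - 1) * (lam * t - 1) ≤ P * (lam * t - 1) := by
      rw [hPD, hpow]
      nlinarith [mul_nonneg (mul_nonneg (by linarith : (0:ℤ) ≤ b0 - lam) hX.le) (by linarith : (0:ℤ) ≤ t)]
    exact le_of_mul_le_mul_right key hD
end
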